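/- PCEA are strictly more expressive than CCEA: there exists a PCEA P over the schema σ₀ with relations R(·,·), S(·,·), T(·), such that no CCEA C satisfies ⟦C⟧_n(S) = ⟦P⟧_n(S) for all streams S and positions n. Concretely, the query selecting positions of tuples R(a,b), T(a), S(a,b) (where R and S agree on both attributes and T agrees with their first attribute, in any arrival order before the last tuple) is PCEA-definable but not CCEA-definable. -/
import Mathlib


/-- A transition of a Parallelized Complex Event Automaton: a finite set of
predecessor states, a unary predicate on tuples, one binary predicate per
predecessor state, a nonempty set of marking labels, and a target state. -/
structure PTransition (Q T Ω : Type*) where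
  pred : Finset Q
  unary : Set T
  bin : Q → Set (T × T)
  label : Set Ω
  target : Q

/-- A Parallelized Complex Event Automaton (PCEA). -/
structure PCEA (Q T Ω : Type*) where
  Δ : Set (PTransition Q T Ω)
  F : Set Q
  label_nonempty : ∀ tr ∈ Δ, tr.label.Nonempty

namespace PCEA

variable {Q T Ω : Type*}

/-- A run tree of a PCEA `M` over the stream `S`, with root configuration at
state `q` and stream position `i`.  Each node is justified by a transition
whose predecessor-state set is exactly the set of states of its children
(one child per predecessor state), the positions of children are strictly
smaller than the position of the node, the current tuple satisfies the unary
predicate, and each child's tuple together with the current tuple satisfies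
the binary predicate assigned to the child's state. -/
inductive PRun (M : PCEA Q T Ω) (S : ℕ → T) : Q → ℕ → Type _ where
  | node (tr : PTransition Q T Ω) (htr : tr ∈ M.Δ) (i : ℕ) (hU : S i ∈ tr.unary)
      (cpos : ∀ p, p ∈ tr.pred → ℕ)
      (child : ∀ p, (hp : p ∈ tr.pred) → PRun M S p (cpos p hp))
      (hlt : ∀ p, (hp : p ∈ tr.pred) → cpos p hp < i)
      (hB : ∀ p, (hp : p ∈ tr.pred) → (S (cpos p hp), S i) ∈ tr.bin p) :
      PRun M S tr.target i

/-- The valuation `ν_τ : Ω → 2^ℕ` produced by a run tree. -/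
def PRun.val {M : PCEA Q T Ω} {S : ℕ → T} :
    {q : Q} → {i : ℕ} → PRun M S q i → (Ω → Set ℕ)
  | _, _, .node tr _ i _ _ child _ _ => fun ℓ =>
      {j | j = i ∧ ℓ ∈ tr.label} ∪
      {j | ∃ p, ∃ hp : p ∈ tr.pred, j ∈ (child p hp).val ℓ}

/-- The list of configurations `(state, position, label set)` of the nodes of a
run tree. -/
noncomputable def PRun.configList {M : PCEA Q T Ω} {S : ℕ → T} :
    {q : Q} → {i : ℕ} → PRun M S q i → List (Q × ℕ × Set Ω)
  | _, _, .node tr _ i _ _ child _ _ =>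
      (tr.target, i, tr.label) ::
        tr.pred.attach.toList.flatMap (fun p => (child p.1 p.2).configList)
  termination_by structural _ _ τ => τ

/-- The output of a PCEA over a stream at position `n`: the valuations of all
accepting run trees at position `n`. -/
def Output (M : PCEA Q T Ω) (S : ℕ → T) (n : ℕ) : Set (Ω → Set ℕ) :=
  {ν | ∃ q, q ∈ M.F ∧ ∃ τ : PRun M S q n, τ.val = ν}

/-- A run is simple if no two distinct nodes mark the same position with a
common label. -/
def PRun.Simple {M : PCEA Q T Ω} {S : ℕ → T} {q : Q} {i : ℕ}
    (τ : PRun M S q i) : Prop :=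
  τ.configList.Pairwise (fun c₁ c₂ => c₁.2.1 = c₂.2.1 → c₁.2.2 ∩ c₂.2.2 = ∅)

/-- A PCEA is unambiguous if every accepting run is simple and distinct
accepting runs (at the same position of the same stream) produce distinct
valuations. -/
def Unambiguous (M : PCEA Q T Ω) : Prop :=
  (∀ (S : ℕ → T) (q : Q), q ∈ M.F → ∀ (n : ℕ) (τ : PRun M S q n), τ.Simple) ∧
  (∀ (S : ℕ → T) (n : ℕ)
      (x y : Σ q : {q : Q // q ∈ M.F}, PRun M S q.1 n),
      x.2.val = y.2.val → x = y)

end PCEA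
/-- A Chain Complex Event Automaton (CCEA): transitions compare the current
tuple only with the immediately preceding selected tuple. -/
structure CCEA (Q T Ω : Type*) where
  Δ : Set (Q × Set T × Set (T × T) × Set Ω × Q)
  I : Q → Option (Set T × Set Ω)
  F : Set Q
  label_nonempty : ∀ tr ∈ Δ, tr.2.2.2.1.Nonempty
  init_label_nonempty : ∀ q U L, I q = some (U, L) → L.Nonempty

namespace CCEA

variable {Q T Ω : Type*}

/-- `CRun M S q n ν`: there is a run of the CCEA `M` over the stream `S`
ending at state `q` and position `n`, with valuation `ν`. -/
inductive CRun (M : CCEA Q T Ω) (S : ℕ → T) : Q → ℕ → (Ω → Set ℕ) → Prop where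
  | init (q : Q) (U : Set T) (L : Set Ω) (i : ℕ)
      (h : M.I q = some (U, L)) (hU : S i ∈ U) :
      CRun M S q i (fun ℓ => {j | j = i ∧ ℓ ∈ L})
  | step (p : Q) (i : ℕ) (ν : Ω → Set ℕ) (h₀ : CRun M S p i ν)
      (U : Set T) (B : Set (T × T)) (L : Set Ω) (q : Q) (j : ℕ)
      (h : (p, U, B, L, q) ∈ M.Δ) (hij : i < j) (hU : S j ∈ U)
      (hB : (S i, S j) ∈ B) :
      CRun M S q j (fun ℓ => {x | x = j ∧ ℓ ∈ L} ∪ ν ℓ)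

/-- The output of a CCEA over a stream at position `n`. -/
def Output (M : CCEA Q T Ω) (S : ℕ → T) (n : ℕ) : Set (Ω → Set ℕ) :=
  {ν | ∃ q ∈ M.F, CRun M S q n ν}

end CCEA

/-- Tuples of the schema `σ₀`, with relations `R(·,·)`, `S(·,·)`, `T(·)` over
data values `ℕ`. -/
inductive Tup : Type where
  | R (a b : ℕ)
  | S (a b : ℕ)
  | T (a : ℕ)

/-! ### Auxiliary development -/

inductive Qp : Type where
  | lR | lT | lS | mS | mR | acc
deriving DecidableEq

instance : Finite Qp := by
  refine Finite.of_injective (fun q : Qp => (match q with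
    | .lR => 0 | .lT => 1 | .lS => 2 | .mS => 3 | .mR => 4 | .acc => 5 : Fin 6)) ?_
  intro a b h
  cases a <;> cases b <;> simp_all

def isR : Set Tup := {t | ∃ a b, t = .R a b}
def isS : Set Tup := {t | ∃ a b, t = .S a b}
def isT : Set Tup := {t | ∃ a, t = .T a}
def binRS : Set (Tup × Tup) := {p | ∃ a b, p = (.R a b, .S a b)}
def binTS : Set (Tup × Tup) := {p | ∃ a b, p = (.T a, .S a b)}
def binTR : Set (Tup × Tup) := {p | ∃ a b, p = (.T a, .R a b)}
def binSR : Set (Tup × Tup) := {p | ∃ a b, p = (.S a b, .R a b)}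
def binST : Set (Tup × Tup) := {p | ∃ a b, p = (.S a b, .T a)}
def binRT : Set (Tup × Tup) := {p | ∃ a b, p = (.R a b, .T a)}

def t1 : PTransition Qp Tup Unit := ⟨∅, isR, fun _ => ∅, Set.univ, .lR⟩
def t2 : PTransition Qp Tup Unit := ⟨∅, isT, fun _ => ∅, Set.univ, .lT⟩
def t3 : PTransition Qp Tup Unit := ⟨∅, isS, fun _ => ∅, Set.univ, .lS⟩
def t4 : PTransition Qp Tup Unit :=
  ⟨{.lR, .lT}, isS, fun q => if q = .lR then binRS else binTS, Set.univ, .acc⟩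
def t5 : PTransition Qp Tup Unit :=
  ⟨{.lT, .lS}, isR, fun q => if q = .lT then binTR else binSR, Set.univ, .acc⟩
def t6 : PTransition Qp Tup Unit := ⟨{.lR}, isS, fun _ => binRS, Set.univ, .mS⟩
def t7 : PTransition Qp Tup Unit := ⟨{.mS}, isT, fun _ => binST, Set.univ, .acc⟩
def t8 : PTransition Qp Tup Unit := ⟨{.lS}, isR, fun _ => binSR, Set.univ, .mR⟩
def t9 : PTransition Qp Tup Unit := ⟨{.mR}, isT, fun _ => binRT, Set.univ, .acc⟩

def P0 : PCEA Qp Tup Unit where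
  Δ := {t1, t2, t3, t4, t5, t6, t7, t8, t9}
  F := {.acc}
  label_nonempty := by
    intro tr htr
    rcases htr with h|h|h|h|h|h|h|h|h <;> subst h <;> exact ⟨(), trivial⟩

/-! #### Inversion lemmas for runs of `P0` -/

lemma run_lR' {St : ℕ → Tup} {q : Qp} {i : ℕ} (τ : PCEA.PRun P0 St q i) (hq : q = .lR) :
    (∃ a b, St i = .R a b) ∧ τ.val = fun _ => ({i} : Set ℕ) := by
  cases τ with
  | node tr htr i hU cpos child hlt hB =>
    rcases htr with h|h|h|h|h|h|h|h|h <;> subst h <;>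
        simp [t1,t2,t3,t4,t5,t6,t7,t8,t9] at hq
    refine ⟨hU, ?_⟩
    funext ℓ
    ext x
    simp [PCEA.PRun.val, t1]

lemma run_lT' {St : ℕ → Tup} {q : Qp} {i : ℕ} (τ : PCEA.PRun P0 St q i) (hq : q = .lT) :
    (∃ a, St i = .T a) ∧ τ.val = fun _ => ({i} : Set ℕ) := by
  cases τ with
  | node tr htr i hU cpos child hlt hB =>
    rcases htr with h|h|h|h|h|h|h|h|h <;> subst h <;>
        simp [t1,t2,t3,t4,t5,t6,t7,t8,t9] at hq
    refine ⟨hU, ?_⟩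
    funext ℓ
    ext x
    simp [PCEA.PRun.val, t2]

lemma run_lS' {St : ℕ → Tup} {q : Qp} {i : ℕ} (τ : PCEA.PRun P0 St q i) (hq : q = .lS) :
    (∃ a b, St i = .S a b) ∧ τ.val = fun _ => ({i} : Set ℕ) := by
  cases τ with
  | node tr htr i hU cpos child hlt hB =>
    rcases htr with h|h|h|h|h|h|h|h|h <;> subst h <;>
        simp [t1,t2,t3,t4,t5,t6,t7,t8,t9] at hq
    refine ⟨hU, ?_⟩
    funext ℓ
    ext x
    simp [PCEA.PRun.val, t3]

lemma run_mS' {St : ℕ → Tup} {q : Qp} {k : ℕ} (τ : PCEA.PRun P0 St q k) (hq : q = .mS) :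
    ∃ a b i, i < k ∧ St i = .R a b ∧ St k = .S a b ∧
      τ.val = fun _ => ({i, k} : Set ℕ) := by
  cases τ with
  | node tr htr k hU cpos child hlt hB =>
    rcases htr with h|h|h|h|h|h|h|h|h <;> subst h <;>
        simp [t1,t2,t3,t4,t5,t6,t7,t8,t9] at hq
    -- tr = t6
    have hp : Qp.lR ∈ t6.pred := by decide
    obtain ⟨a, b, hab⟩ := hB .lR hp
    have hab1 : St (cpos .lR hp) = .R a b := by
      have := congrArg Prod.fst hab; simpa using this
    have hab2 : St k = .S a b := by
      have := congrArg Prod.snd hab; simpa using this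
    obtain ⟨-, hval⟩ := run_lR' (child .lR hp) rfl
    refine ⟨a, b, cpos .lR hp, hlt .lR hp, hab1, hab2, ?_⟩
    funext ℓ
    ext x
    simp only [PCEA.PRun.val, Set.mem_union, Set.mem_setOf_eq]
    constructor
    · rintro (⟨rfl, -⟩ | ⟨p, hpp, hx⟩)
      · simp
      · cases p
        case lR =>
          rw [hval] at hx
          simp at hx
          simp [hx]
        all_goals exact absurd hpp (by decide)
    · intro hx
      rcases hx with rfl | rfl
      · exact Or.inr ⟨.lR, hp, by rw [hval]; simp⟩
      · exact Or.inl ⟨rfl, trivial⟩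

lemma run_mR' {St : ℕ → Tup} {q : Qp} {i : ℕ} (τ : PCEA.PRun P0 St q i) (hq : q = .mR) :
    ∃ a b k, k < i ∧ St k = .S a b ∧ St i = .R a b ∧
      τ.val = fun _ => ({k, i} : Set ℕ) := by
  cases τ with
  | node tr htr i hU cpos child hlt hB =>
    rcases htr with h|h|h|h|h|h|h|h|h <;> subst h <;>
        simp [t1,t2,t3,t4,t5,t6,t7,t8,t9] at hq
    -- tr = t8
    have hp : Qp.lS ∈ t8.pred := by decide
    obtain ⟨a, b, hab⟩ := hB .lS hp
    have hab1 : St (cpos .lS hp) = .S a b := by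
      have := congrArg Prod.fst hab; simpa using this
    have hab2 : St i = .R a b := by
      have := congrArg Prod.snd hab; simpa using this
    obtain ⟨-, hval⟩ := run_lS' (child .lS hp) rfl
    refine ⟨a, b, cpos .lS hp, hlt .lS hp, hab1, hab2, ?_⟩
    funext ℓ
    ext x
    simp only [PCEA.PRun.val, Set.mem_union, Set.mem_setOf_eq]
    constructor
    · rintro (⟨rfl, -⟩ | ⟨p, hpp, hx⟩)
      · simp
      · cases p
        case lS =>
          rw [hval] at hx
          simp at hx
          simp [hx]
        all_goals exact absurd hpp (by decide)
    · intro hx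
      rcases hx with rfl | rfl
      · exact Or.inr ⟨.lS, hp, by rw [hval]; simp⟩
      · exact Or.inl ⟨rfl, trivial⟩

lemma run_acc' {St : ℕ → Tup} {q : Qp} {n : ℕ} (τ : PCEA.PRun P0 St q n) (hq : q = .acc) :
    ∃ a b i j k, St i = .R a b ∧ St j = .T a ∧ St k = .S a b ∧
      i ≠ j ∧ i ≠ k ∧ j ≠ k ∧ max i (max j k) = n ∧
      τ.val = fun _ : Unit => ({i, j, k} : Set ℕ) := by
  cases τ with
  | node tr htr n hU cpos child hlt hB =>
    rcases htr with h|h|h|h|h|h|h|h|h <;> subst h <;>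
        simp [t1,t2,t3,t4,t5,t6,t7,t8,t9] at hq
    -- case t4 : last tuple is S(a,b), children R(a,b) and T(a)
    · have hpR : Qp.lR ∈ t4.pred := by decide
      have hpT : Qp.lT ∈ t4.pred := by decide
      have hBR := hB .lR hpR
      have hBT := hB .lT hpT
      rw [show t4.bin .lR = binRS by simp [t4]] at hBR
      rw [show t4.bin .lT = binTS by simp [t4]] at hBT
      obtain ⟨a, b, hab⟩ := hBR
      have hiR : St (cpos .lR hpR) = .R a b := by
        have := congrArg Prod.fst hab; simpa using this
      have hnS : St n = .S a b := by
        have := congrArg Prod.snd hab; simpa using this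
      obtain ⟨a', b', hab'⟩ := hBT
      have hjT : St (cpos .lT hpT) = .T a' := by
        have := congrArg Prod.fst hab'; simpa using this
      have hnS' : St n = .S a' b' := by
        have := congrArg Prod.snd hab'; simpa using this
      have haa : a' = a ∧ b' = b := by
        rw [hnS] at hnS'; exact ⟨by injection hnS'.symm, by injection hnS'.symm⟩
      rw [haa.1] at hjT
      obtain ⟨-, hvR⟩ := run_lR' (child .lR hpR) rfl
      obtain ⟨-, hvT⟩ := run_lT' (child .lT hpT) rfl
      have hltR := hlt .lR hpR
      have hltT := hlt .lT hpT
      refine ⟨a, b, cpos .lR hpR, cpos .lT hpT, n, hiR, hjT, hnS, ?_, by omega, by omega,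
        by omega, ?_⟩
      · intro hcon
        rw [hcon, hjT] at hiR
        exact absurd hiR (by simp)
      · funext ℓ
        ext x
        simp only [PCEA.PRun.val, Set.mem_union, Set.mem_setOf_eq]
        constructor
        · rintro (⟨rfl, -⟩ | ⟨p, hpp, hx⟩)
          · simp
          · cases p
            case lR => rw [hvR] at hx; simp at hx; simp [hx]
            case lT => rw [hvT] at hx; simp at hx; simp [hx]
            all_goals exact absurd hpp (by decide)
        · intro hx
          rcases hx with rfl | rfl | rfl
          · exact Or.inr ⟨.lR, hpR, by rw [hvR]; simp⟩
          · exact Or.inr ⟨.lT, hpT, by rw [hvT]; simp⟩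
          · exact Or.inl ⟨rfl, trivial⟩
    -- case t5 : last tuple is R(a,b), children T(a) and S(a,b)
    · have hpT : Qp.lT ∈ t5.pred := by decide
      have hpS : Qp.lS ∈ t5.pred := by decide
      have hBT := hB .lT hpT
      have hBS := hB .lS hpS
      rw [show t5.bin .lT = binTR by simp [t5]] at hBT
      rw [show t5.bin .lS = binSR by simp [t5]] at hBS
      obtain ⟨a, b, hab⟩ := hBS
      have hkS : St (cpos .lS hpS) = .S a b := by
        have := congrArg Prod.fst hab; simpa using this
      have hnR : St n = .R a b := by
        have := congrArg Prod.snd hab; simpa using this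
      obtain ⟨a', b', hab'⟩ := hBT
      have hjT : St (cpos .lT hpT) = .T a' := by
        have := congrArg Prod.fst hab'; simpa using this
      have hnR' : St n = .R a' b' := by
        have := congrArg Prod.snd hab'; simpa using this
      have haa : a' = a ∧ b' = b := by
        rw [hnR] at hnR'; exact ⟨by injection hnR'.symm, by injection hnR'.symm⟩
      rw [haa.1] at hjT
      obtain ⟨-, hvT⟩ := run_lT' (child .lT hpT) rfl
      obtain ⟨-, hvS⟩ := run_lS' (child .lS hpS) rfl
      have hltT := hlt .lT hpT
      have hltS := hlt .lS hpS
      refine ⟨a, b, n, cpos .lT hpT, cpos .lS hpS, hnR, hjT, hkS, by omega, by omega, ?_,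
        by omega, ?_⟩
      · intro hcon
        rw [hcon, hkS] at hjT
        exact absurd hjT (by simp)
      · funext ℓ
        ext x
        simp only [PCEA.PRun.val, Set.mem_union, Set.mem_setOf_eq]
        constructor
        · rintro (⟨rfl, -⟩ | ⟨p, hpp, hx⟩)
          · simp
          · cases p
            case lT => rw [hvT] at hx; simp at hx; simp [hx]
            case lS => rw [hvS] at hx; simp at hx; simp [hx]
            all_goals exact absurd hpp (by decide)
        · intro hx
          rcases hx with rfl | rfl | rfl
          · exact Or.inl ⟨rfl, trivial⟩
          · exact Or.inr ⟨.lT, hpT, by rw [hvT]; simp⟩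
          · exact Or.inr ⟨.lS, hpS, by rw [hvS]; simp⟩
    -- case t7 : last tuple is T(a), below it S(a,b) above R(a,b)
    · have hpM : Qp.mS ∈ t7.pred := by decide
      obtain ⟨a, b, i, hik, hiR, hkS, hvM⟩ := run_mS' (child .mS hpM) rfl
      obtain ⟨a', b', hab'⟩ := hB .mS hpM
      have hkS' : St (cpos .mS hpM) = .S a' b' := by
        have := congrArg Prod.fst hab'; simpa using this
      have hnT : St n = .T a' := by
        have := congrArg Prod.snd hab'; simpa using this
      have haa : a' = a := by
        rw [hkS] at hkS'; injection hkS'.symm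
      rw [haa] at hnT
      have hltM := hlt .mS hpM
      refine ⟨a, b, i, n, cpos .mS hpM, hiR, hnT, hkS, by omega, by omega, by omega,
        by omega, ?_⟩
      funext ℓ
      ext x
      simp only [PCEA.PRun.val, Set.mem_union, Set.mem_setOf_eq]
      constructor
      · rintro (⟨rfl, -⟩ | ⟨p, hpp, hx⟩)
        · simp
        · cases p
          case mS => rw [hvM] at hx; simp at hx; rcases hx with rfl | rfl <;> simp
          all_goals exact absurd hpp (by decide)
      · intro hx
        rcases hx with rfl | rfl | rfl
        · exact Or.inr ⟨.mS, hpM, by rw [hvM]; simp⟩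
        · exact Or.inl ⟨rfl, trivial⟩
        · exact Or.inr ⟨.mS, hpM, by rw [hvM]; simp⟩
    -- case t9 : last tuple is T(a), below it R(a,b) above S(a,b)
    · have hpM : Qp.mR ∈ t9.pred := by decide
      obtain ⟨a, b, k, hki, hkS, hiR, hvM⟩ := run_mR' (child .mR hpM) rfl
      obtain ⟨a', b', hab'⟩ := hB .mR hpM
      have hiR' : St (cpos .mR hpM) = .R a' b' := by
        have := congrArg Prod.fst hab'; simpa using this
      have hnT : St n = .T a' := by
        have := congrArg Prod.snd hab'; simpa using this
      have haa : a' = a := by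
        rw [hiR] at hiR'; injection hiR'.symm
      rw [haa] at hnT
      have hltM := hlt .mR hpM
      refine ⟨a, b, cpos .mR hpM, n, k, hiR, hnT, hkS, by omega, by omega, by omega,
        by omega, ?_⟩
      funext ℓ
      ext x
      simp only [PCEA.PRun.val, Set.mem_union, Set.mem_setOf_eq]
      constructor
      · rintro (⟨rfl, -⟩ | ⟨p, hpp, hx⟩)
        · simp
        · cases p
          case mR => rw [hvM] at hx; simp at hx; rcases hx with rfl | rfl <;> simp
          all_goals exact absurd hpp (by decide)
      · intro hx
        rcases hx with rfl | rfl | rfl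
        · exact Or.inr ⟨.mR, hpM, by rw [hvM]; simp⟩
        · exact Or.inl ⟨rfl, trivial⟩
        · exact Or.inr ⟨.mR, hpM, by rw [hvM]; simp⟩

/-! #### Construction of runs of `P0` -/

lemma exR {St : ℕ → Tup} {i a b : ℕ} (h : St i = .R a b) :
    ∃ τ : PCEA.PRun P0 St .lR i, τ.val = fun _ => ({i} : Set ℕ) := by
  refine ⟨PCEA.PRun.node t1 (by simp [P0]) i ⟨a, b, h⟩ (fun _ _ => 0)
    (fun p hp => absurd hp (by simp [t1])) (fun p hp => absurd hp (by simp [t1]))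
    (fun p hp => absurd hp (by simp [t1])), ?_⟩
  funext ℓ; ext x; simp [PCEA.PRun.val, t1]

lemma exT {St : ℕ → Tup} {i a : ℕ} (h : St i = .T a) :
    ∃ τ : PCEA.PRun P0 St .lT i, τ.val = fun _ => ({i} : Set ℕ) := by
  refine ⟨PCEA.PRun.node t2 (by simp [P0]) i ⟨a, h⟩ (fun _ _ => 0)
    (fun p hp => absurd hp (by simp [t2])) (fun p hp => absurd hp (by simp [t2]))
    (fun p hp => absurd hp (by simp [t2])), ?_⟩
  funext ℓ; ext x; simp [PCEA.PRun.val, t2]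

lemma exS {St : ℕ → Tup} {i a b : ℕ} (h : St i = .S a b) :
    ∃ τ : PCEA.PRun P0 St .lS i, τ.val = fun _ => ({i} : Set ℕ) := by
  refine ⟨PCEA.PRun.node t3 (by simp [P0]) i ⟨a, b, h⟩ (fun _ _ => 0)
    (fun p hp => absurd hp (by simp [t3])) (fun p hp => absurd hp (by simp [t3]))
    (fun p hp => absurd hp (by simp [t3])), ?_⟩
  funext ℓ; ext x; simp [PCEA.PRun.val, t3]

lemma exAcc4 {St : ℕ → Tup} {n i j a b : ℕ} (hi : i < n) (hj : j < n)
    (hiR : St i = .R a b) (hjT : St j = .T a) (hnS : St n = .S a b) :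
    ∃ τ : PCEA.PRun P0 St .acc n, τ.val = fun _ => ({i, j, n} : Set ℕ) := by
  obtain ⟨τR, hvR⟩ := exR hiR
  obtain ⟨τT, hvT⟩ := exT hjT
  refine ⟨PCEA.PRun.node t4 (by simp [P0]) n ⟨a, b, hnS⟩
    (fun p _ => match p with | .lR => i | .lT => j | _ => 0)
    (fun p hp => match p, hp with
      | .lR, _ => τR
      | .lT, _ => τT
      | .lS, hp => absurd hp (by decide)
      | .mS, hp => absurd hp (by decide)
      | .mR, hp => absurd hp (by decide)
      | .acc, hp => absurd hp (by decide))
    (fun p hp => match p, hp with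
      | .lR, _ => hi
      | .lT, _ => hj
      | .lS, hp => absurd hp (by decide)
      | .mS, hp => absurd hp (by decide)
      | .mR, hp => absurd hp (by decide)
      | .acc, hp => absurd hp (by decide))
    (fun p hp => match p, hp with
      | .lR, _ => show (St i, St n) ∈ t4.bin .lR by
          rw [show t4.bin .lR = binRS by simp [t4]]; exact ⟨a, b, by rw [hiR, hnS]⟩
      | .lT, _ => show (St j, St n) ∈ t4.bin .lT by
          rw [show t4.bin .lT = binTS by simp [t4]]; exact ⟨a, b, by rw [hjT, hnS]⟩
      | .lS, hp => absurd hp (by decide)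
      | .mS, hp => absurd hp (by decide)
      | .mR, hp => absurd hp (by decide)
      | .acc, hp => absurd hp (by decide)), ?_⟩
  funext ℓ
  ext x
  simp only [PCEA.PRun.val, Set.mem_union, Set.mem_setOf_eq]
  constructor
  · rintro (⟨rfl, -⟩ | ⟨p, hpp, hx⟩)
    · simp
    · cases p
      case lR =>
        have hx' : x ∈ τR.val ℓ := hx
        rw [hvR] at hx'; simp at hx'; simp [hx']
      case lT =>
        have hx' : x ∈ τT.val ℓ := hx
        rw [hvT] at hx'; simp at hx'; simp [hx']
      all_goals exact absurd hpp (by decide)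
  · intro hx
    rcases hx with rfl | rfl | rfl
    · exact Or.inr ⟨.lR, by decide, show x ∈ τR.val ℓ by rw [hvR]; simp⟩
    · exact Or.inr ⟨.lT, by decide, show x ∈ τT.val ℓ by rw [hvT]; simp⟩
    · exact Or.inl ⟨rfl, trivial⟩

lemma exAcc5 {St : ℕ → Tup} {n j k a b : ℕ} (hj : j < n) (hk : k < n)
    (hjT : St j = .T a) (hkS : St k = .S a b) (hnR : St n = .R a b) :
    ∃ τ : PCEA.PRun P0 St .acc n, τ.val = fun _ => ({n, j, k} : Set ℕ) := by
  obtain ⟨τT, hvT⟩ := exT hjT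
  obtain ⟨τS, hvS⟩ := exS hkS
  refine ⟨PCEA.PRun.node t5 (by simp [P0]) n ⟨a, b, hnR⟩
    (fun p _ => match p with | .lT => j | .lS => k | _ => 0)
    (fun p hp => match p, hp with
      | .lT, _ => τT
      | .lS, _ => τS
      | .lR, hp => absurd hp (by decide)
      | .mS, hp => absurd hp (by decide)
      | .mR, hp => absurd hp (by decide)
      | .acc, hp => absurd hp (by decide))
    (fun p hp => match p, hp with
      | .lT, _ => hj
      | .lS, _ => hk
      | .lR, hp => absurd hp (by decide)
      | .mS, hp => absurd hp (by decide)
      | .mR, hp => absurd hp (by decide)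
      | .acc, hp => absurd hp (by decide))
    (fun p hp => match p, hp with
      | .lT, _ => show (St j, St n) ∈ t5.bin .lT by
          rw [show t5.bin .lT = binTR by simp [t5]]; exact ⟨a, b, by rw [hjT, hnR]⟩
      | .lS, _ => show (St k, St n) ∈ t5.bin .lS by
          rw [show t5.bin .lS = binSR by simp [t5]]; exact ⟨a, b, by rw [hkS, hnR]⟩
      | .lR, hp => absurd hp (by decide)
      | .mS, hp => absurd hp (by decide)
      | .mR, hp => absurd hp (by decide)
      | .acc, hp => absurd hp (by decide)), ?_⟩
  funext ℓ
  ext x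
  simp only [PCEA.PRun.val, Set.mem_union, Set.mem_setOf_eq]
  constructor
  · rintro (⟨rfl, -⟩ | ⟨p, hpp, hx⟩)
    · simp
    · cases p
      case lT =>
        have hx' : x ∈ τT.val ℓ := hx
        rw [hvT] at hx'; simp at hx'; simp [hx']
      case lS =>
        have hx' : x ∈ τS.val ℓ := hx
        rw [hvS] at hx'; simp at hx'; simp [hx']
      all_goals exact absurd hpp (by decide)
  · intro hx
    rcases hx with rfl | rfl | rfl
    · exact Or.inl ⟨rfl, trivial⟩
    · exact Or.inr ⟨.lT, by decide, show x ∈ τT.val ℓ by rw [hvT]; simp⟩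
    · exact Or.inr ⟨.lS, by decide, show x ∈ τS.val ℓ by rw [hvS]; simp⟩

lemma exMS {St : ℕ → Tup} {i k a b : ℕ} (hik : i < k)
    (hiR : St i = .R a b) (hkS : St k = .S a b) :
    ∃ τ : PCEA.PRun P0 St .mS k, τ.val = fun _ => ({i, k} : Set ℕ) := by
  obtain ⟨τR, hvR⟩ := exR hiR
  refine ⟨PCEA.PRun.node t6 (by simp [P0]) k ⟨a, b, hkS⟩
    (fun p _ => match p with | .lR => i | _ => 0)
    (fun p hp => match p, hp with
      | .lR, _ => τR
      | .lT, hp => absurd hp (by decide)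
      | .lS, hp => absurd hp (by decide)
      | .mS, hp => absurd hp (by decide)
      | .mR, hp => absurd hp (by decide)
      | .acc, hp => absurd hp (by decide))
    (fun p hp => match p, hp with
      | .lR, _ => hik
      | .lT, hp => absurd hp (by decide)
      | .lS, hp => absurd hp (by decide)
      | .mS, hp => absurd hp (by decide)
      | .mR, hp => absurd hp (by decide)
      | .acc, hp => absurd hp (by decide))
    (fun p hp => match p, hp with
      | .lR, _ => show (St i, St k) ∈ t6.bin .lR from ⟨a, b, by rw [hiR, hkS]⟩
      | .lT, hp => absurd hp (by decide)
      | .lS, hp => absurd hp (by decide)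
      | .mS, hp => absurd hp (by decide)
      | .mR, hp => absurd hp (by decide)
      | .acc, hp => absurd hp (by decide)), ?_⟩
  funext ℓ
  ext x
  simp only [PCEA.PRun.val, Set.mem_union, Set.mem_setOf_eq]
  constructor
  · rintro (⟨rfl, -⟩ | ⟨p, hpp, hx⟩)
    · simp
    · cases p
      case lR =>
        have hx' : x ∈ τR.val ℓ := hx
        rw [hvR] at hx'; simp at hx'; simp [hx']
      all_goals exact absurd hpp (by decide)
  · intro hx
    rcases hx with rfl | rfl
    · exact Or.inr ⟨.lR, by decide, show x ∈ τR.val ℓ by rw [hvR]; simp⟩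
    · exact Or.inl ⟨rfl, trivial⟩

lemma exMR {St : ℕ → Tup} {k i a b : ℕ} (hki : k < i)
    (hkS : St k = .S a b) (hiR : St i = .R a b) :
    ∃ τ : PCEA.PRun P0 St .mR i, τ.val = fun _ => ({k, i} : Set ℕ) := by
  obtain ⟨τS, hvS⟩ := exS hkS
  refine ⟨PCEA.PRun.node t8 (by simp [P0]) i ⟨a, b, hiR⟩
    (fun p _ => match p with | .lS => k | _ => 0)
    (fun p hp => match p, hp with
      | .lS, _ => τS
      | .lR, hp => absurd hp (by decide)
      | .lT, hp => absurd hp (by decide)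
      | .mS, hp => absurd hp (by decide)
      | .mR, hp => absurd hp (by decide)
      | .acc, hp => absurd hp (by decide))
    (fun p hp => match p, hp with
      | .lS, _ => hki
      | .lR, hp => absurd hp (by decide)
      | .lT, hp => absurd hp (by decide)
      | .mS, hp => absurd hp (by decide)
      | .mR, hp => absurd hp (by decide)
      | .acc, hp => absurd hp (by decide))
    (fun p hp => match p, hp with
      | .lS, _ => show (St k, St i) ∈ t8.bin .lS from ⟨a, b, by rw [hkS, hiR]⟩
      | .lR, hp => absurd hp (by decide)
      | .lT, hp => absurd hp (by decide)
      | .mS, hp => absurd hp (by decide)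
      | .mR, hp => absurd hp (by decide)
      | .acc, hp => absurd hp (by decide)), ?_⟩
  funext ℓ
  ext x
  simp only [PCEA.PRun.val, Set.mem_union, Set.mem_setOf_eq]
  constructor
  · rintro (⟨rfl, -⟩ | ⟨p, hpp, hx⟩)
    · simp
    · cases p
      case lS =>
        have hx' : x ∈ τS.val ℓ := hx
        rw [hvS] at hx'; simp at hx'; simp [hx']
      all_goals exact absurd hpp (by decide)
  · intro hx
    rcases hx with rfl | rfl
    · exact Or.inr ⟨.lS, by decide, show x ∈ τS.val ℓ by rw [hvS]; simp⟩
    · exact Or.inl ⟨rfl, trivial⟩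

lemma exAcc7 {St : ℕ → Tup} {n i k a b : ℕ} (hik : i < k) (hk : k < n)
    (hiR : St i = .R a b) (hkS : St k = .S a b) (hnT : St n = .T a) :
    ∃ τ : PCEA.PRun P0 St .acc n, τ.val = fun _ => ({i, n, k} : Set ℕ) := by
  obtain ⟨τM, hvM⟩ := exMS hik hiR hkS
  refine ⟨PCEA.PRun.node t7 (by simp [P0]) n ⟨a, hnT⟩
    (fun p _ => match p with | .mS => k | _ => 0)
    (fun p hp => match p, hp with
      | .mS, _ => τM
      | .lR, hp => absurd hp (by decide)
      | .lT, hp => absurd hp (by decide)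
      | .lS, hp => absurd hp (by decide)
      | .mR, hp => absurd hp (by decide)
      | .acc, hp => absurd hp (by decide))
    (fun p hp => match p, hp with
      | .mS, _ => hk
      | .lR, hp => absurd hp (by decide)
      | .lT, hp => absurd hp (by decide)
      | .lS, hp => absurd hp (by decide)
      | .mR, hp => absurd hp (by decide)
      | .acc, hp => absurd hp (by decide))
    (fun p hp => match p, hp with
      | .mS, _ => show (St k, St n) ∈ t7.bin .mS from ⟨a, b, by rw [hkS, hnT]⟩
      | .lR, hp => absurd hp (by decide)
      | .lT, hp => absurd hp (by decide)
      | .lS, hp => absurd hp (by decide)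
      | .mR, hp => absurd hp (by decide)
      | .acc, hp => absurd hp (by decide)), ?_⟩
  funext ℓ
  ext x
  simp only [PCEA.PRun.val, Set.mem_union, Set.mem_setOf_eq]
  constructor
  · rintro (⟨rfl, -⟩ | ⟨p, hpp, hx⟩)
    · simp
    · cases p
      case mS =>
        have hx' : x ∈ τM.val ℓ := hx
        rw [hvM] at hx'; simp at hx'; rcases hx' with rfl | rfl <;> simp
      all_goals exact absurd hpp (by decide)
  · intro hx
    rcases hx with rfl | rfl | rfl
    · exact Or.inr ⟨.mS, by decide, show x ∈ τM.val ℓ by rw [hvM]; simp⟩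
    · exact Or.inl ⟨rfl, trivial⟩
    · exact Or.inr ⟨.mS, by decide, show x ∈ τM.val ℓ by rw [hvM]; simp⟩

lemma exAcc9 {St : ℕ → Tup} {n i k a b : ℕ} (hki : k < i) (hi : i < n)
    (hiR : St i = .R a b) (hkS : St k = .S a b) (hnT : St n = .T a) :
    ∃ τ : PCEA.PRun P0 St .acc n, τ.val = fun _ => ({i, n, k} : Set ℕ) := by
  obtain ⟨τM, hvM⟩ := exMR hki hkS hiR
  refine ⟨PCEA.PRun.node t9 (by simp [P0]) n ⟨a, hnT⟩
    (fun p _ => match p with | .mR => i | _ => 0)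
    (fun p hp => match p, hp with
      | .mR, _ => τM
      | .lR, hp => absurd hp (by decide)
      | .lT, hp => absurd hp (by decide)
      | .lS, hp => absurd hp (by decide)
      | .mS, hp => absurd hp (by decide)
      | .acc, hp => absurd hp (by decide))
    (fun p hp => match p, hp with
      | .mR, _ => hi
      | .lR, hp => absurd hp (by decide)
      | .lT, hp => absurd hp (by decide)
      | .lS, hp => absurd hp (by decide)
      | .mS, hp => absurd hp (by decide)
      | .acc, hp => absurd hp (by decide))
    (fun p hp => match p, hp with
      | .mR, _ => show (St i, St n) ∈ t9.bin .mR from ⟨a, b, by rw [hiR, hnT]⟩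
      | .lR, hp => absurd hp (by decide)
      | .lT, hp => absurd hp (by decide)
      | .lS, hp => absurd hp (by decide)
      | .mS, hp => absurd hp (by decide)
      | .acc, hp => absurd hp (by decide)), ?_⟩
  funext ℓ
  ext x
  simp only [PCEA.PRun.val, Set.mem_union, Set.mem_setOf_eq]
  constructor
  · rintro (⟨rfl, -⟩ | ⟨p, hpp, hx⟩)
    · simp
    · cases p
      case mR =>
        have hx' : x ∈ τM.val ℓ := hx
        rw [hvM] at hx'; simp at hx'; rcases hx' with rfl | rfl <;> simp
      all_goals exact absurd hpp (by decide)
  · intro hx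
    rcases hx with rfl | rfl | rfl
    · exact Or.inr ⟨.mR, by decide, show x ∈ τM.val ℓ by rw [hvM]; simp⟩
    · exact Or.inl ⟨rfl, trivial⟩
    · exact Or.inr ⟨.mR, by decide, show x ∈ τM.val ℓ by rw [hvM]; simp⟩

/-! #### The output of `P0` -/

lemma output_eq (St : ℕ → Tup) (n : ℕ) :
    P0.Output St n =
      {ν | ∃ (a b : ℕ) (i j k : ℕ),
        St i = Tup.R a b ∧ St j = Tup.T a ∧ St k = Tup.S a b ∧
        i ≠ j ∧ i ≠ k ∧ j ≠ k ∧ max i (max j k) = n ∧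
        ν = fun _ : Unit => ({i, j, k} : Set ℕ)} := by
  ext ν
  constructor
  · rintro ⟨q, hq, τ, rfl⟩
    have hq' : q = .acc := hq
    obtain ⟨a, b, i, j, k, h1, h2, h3, h4, h5, h6, h7, h8⟩ := run_acc' τ hq'
    exact ⟨a, b, i, j, k, h1, h2, h3, h4, h5, h6, h7, h8⟩
  · rintro ⟨a, b, i, j, k, hR, hT, hS, hij, hik, hjk, hmax, rfl⟩
    have hcase : (i < n ∧ j < n ∧ k = n) ∨ (i < n ∧ j = n ∧ k < n) ∨
        (i = n ∧ j < n ∧ k < n) := by omega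
    rcases hcase with ⟨hi, hj, rfl⟩ | ⟨hi, rfl, hk⟩ | ⟨rfl, hj, hk⟩
    · obtain ⟨τ, hv⟩ := exAcc4 hi hj hR hT hS
      exact ⟨.acc, rfl, τ, hv⟩
    · rcases lt_or_gt_of_ne hik with hik' | hik'
      · obtain ⟨τ, hv⟩ := exAcc7 hik' hk hR hS hT
        exact ⟨.acc, rfl, τ, hv⟩
      · obtain ⟨τ, hv⟩ := exAcc9 hik' hi hR hS hT
        exact ⟨.acc, rfl, τ, hv⟩
    · obtain ⟨τ, hv⟩ := exAcc5 hj hk hT hS hR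
      exact ⟨.acc, rfl, τ, hv⟩

/-! #### CCEA lemmas -/

lemma crun_le {Q' : Type} {M : CCEA Q' Tup Unit} {St : ℕ → Tup} {q : Q'} {n : ℕ}
    {ν : Unit → Set ℕ} (h : CCEA.CRun M St q n ν) :
    ∀ ℓ j, j ∈ ν ℓ → j ≤ n := by
  induction h with
  | init q U L i hI hU => intro ℓ j hj; exact le_of_eq hj.1
  | step p i ν' h₀ U B L q j hΔ hij hU hB ih =>
    intro ℓ x hx
    rcases hx with ⟨rfl, -⟩ | hx
    · exact le_rfl
    · exact le_trans (ih ℓ x hx) (le_of_lt hij)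

lemma crun_congr {Q' : Type} {M : CCEA Q' Tup Unit} {St : ℕ → Tup} {q : Q'} {n : ℕ}
    {ν : Unit → Set ℕ} (h : CCEA.CRun M St q n ν) :
    ∀ St' : ℕ → Tup, (∀ k, k ≤ n → St' k = St k) → CCEA.CRun M St' q n ν := by
  induction h with
  | init q U L i hI hU =>
    intro St' hSt
    exact CCEA.CRun.init q U L i hI (by rw [hSt i le_rfl]; exact hU)
  | step p i ν' h₀ U B L q j hΔ hij hU hB ih =>
    intro St' hSt
    refine CCEA.CRun.step p i ν' (ih St' fun k hk => hSt k (le_trans hk (le_of_lt hij)))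
      U B L q j hΔ hij ?_ ?_
    · rw [hSt j le_rfl]; exact hU
    · rw [hSt i (le_of_lt hij), hSt j le_rfl]; exact hB

lemma key_inv {QC : Type} {M : CCEA QC Tup Unit} {St : ℕ → Tup} {qF : QC}
    {ν : Unit → Set ℕ} (h : CCEA.CRun M St qF 2 ν) (h1 : 1 ∈ ν ()) :
    ∃ q1, (∃ ν1, CCEA.CRun M St q1 1 ν1) ∧
      ∃ U B L, (q1, U, B, L, qF) ∈ M.Δ ∧ St 2 ∈ U ∧ (St 1, St 2) ∈ B := by
  cases h with
  | init q U L i hI hU => simp at h1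
  | step p i ν' h₀ U B L q j hΔ hij hU hB =>
    have h1' : 1 ∈ ν' () := by
      rcases h1 with h | h
      · exact absurd h.1 (by norm_num)
      · exact h
    have hle := crun_le h₀ () 1 h1'
    have hi : i = 1 := by omega
    subst hi
    exact ⟨p, ⟨ν', h₀⟩, U, B, L, hΔ, hU, hB⟩

/-- The test streams. -/
def Str (x y : ℕ) : ℕ → Tup := fun n =>
  if n = 0 then .R 0 x else if n = 1 then .T 0 else if n = 2 then .S 0 y else .T 1

/-- PCEA are strictly more expressive than CCEA: there is a
PCEA `P` over the schema `σ₀` — defining the query that selects the positions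
of three tuples `R(a,b)`, `T(a)`, `S(a,b)` (joining on the shared attributes,
arriving in any order before the last of the three, at the current position) —
such that no CCEA agrees with `P` on all streams and positions. -/
theorem pcea_strictly_more_expressive_than_ccea :
    ∃ (QP : Type) (_ : Finite QP) (P : PCEA QP Tup Unit),
      (∀ (S : ℕ → Tup) (n : ℕ),
        P.Output S n =
          {ν | ∃ (a b : ℕ) (i j k : ℕ),
            S i = Tup.R a b ∧ S j = Tup.T a ∧ S k = Tup.S a b ∧
            i ≠ j ∧ i ≠ k ∧ j ≠ k ∧ max i (max j k) = n ∧
            ν = fun _ : Unit => ({i, j, k} : Set ℕ)}) ∧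
      ∀ (QC : Type), Finite QC → ∀ C : CCEA QC Tup Unit,
        ∃ (S : ℕ → Tup) (n : ℕ), C.Output S n ≠ P.Output S n := by
  refine ⟨Qp, inferInstance, P0, output_eq, ?_⟩
  intro QC hfin C
  by_cases hall : ∀ m : ℕ, C.Output (Str m m) 2 = P0.Output (Str m m) 2
  · -- extract, for each `m`, the state of the run after position 1
    have hGood : ∀ m : ℕ, ∃ q1 : QC, (∃ ν1, CCEA.CRun C (Str m m) q1 1 ν1) ∧
        ∃ U B L qF, qF ∈ C.F ∧ (q1, U, B, L, qF) ∈ C.Δ ∧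
          Tup.S 0 m ∈ U ∧ (Tup.T 0, Tup.S 0 m) ∈ B := by
      intro m
      have hν₀ : (fun _ : Unit => ({0, 1, 2} : Set ℕ)) ∈ C.Output (Str m m) 2 := by
        rw [hall m, output_eq]
        exact ⟨0, m, 0, 1, 2, by simp [Str], by simp [Str], by simp [Str],
          by norm_num, by norm_num, by norm_num, by norm_num, rfl⟩
      obtain ⟨qF, hqF, hrun⟩ := hν₀
      obtain ⟨q1, hr1, U, B, L, hΔ, hU, hB⟩ := key_inv hrun (by simp)
      refine ⟨q1, hr1, U, B, L, qF, hqF, hΔ, ?_, ?_⟩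
      · simpa [Str] using hU
      · simpa [Str] using hB
    choose f hf using hGood
    obtain ⟨m, m', hne, hfm⟩ := Finite.exists_ne_map_eq_of_infinite f
    refine ⟨Str m m', 2, ?_⟩
    obtain ⟨⟨ν1, hr1⟩, -⟩ := hf m
    obtain ⟨-, U, B, L, qF, hqF, hΔ, hU, hB⟩ := hf m'
    rw [← hfm] at hΔ
    have hr1' : CCEA.CRun C (Str m m') (f m) 1 ν1 :=
      crun_congr hr1 _ (by intro k hk; interval_cases k <;> rfl)
    have hrun2 := CCEA.CRun.step (f m) 1 ν1 hr1' U B L qF 2 hΔ one_lt_two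
      (by simpa [Str] using hU) (by simpa [Str] using hB)
    intro heq
    have hmem : (fun ℓ => {x | x = 2 ∧ ℓ ∈ L} ∪ ν1 ℓ) ∈ P0.Output (Str m m') 2 :=
      heq ▸ ⟨qF, hqF, hrun2⟩
    rw [output_eq] at hmem
    obtain ⟨a, b, i, j, k, hR, hT, hS, hij, hik, hjk, hmax, -⟩ := hmem
    have hi : i = 0 := by
      have hA : i ≤ 2 := by omega
      interval_cases i
      · rfl
      · simp [Str] at hR
      · simp [Str] at hR
    have hk : k = 2 := by
      have hA : k ≤ 2 := by omega
      interval_cases k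
      · simp [Str] at hS
      · simp [Str] at hS
      · rfl
    subst hi; subst hk
    simp [Str] at hR hS
    exact hne (hR.2.trans hS.2.symm)
  · push_neg at hall
    obtain ⟨m, hm⟩ := hall
    exact ⟨Str m m, 2, hm⟩
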